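/- Let f : [0,a] × ℝⁿ → ℝⁿ be continuous and suppose there exists η > 1 such that ‖f(t,u) + ηu − f(t,v) − ηv‖ ≤ ‖u − v‖ for all t ∈ [0,a] and u,v ∈ ℝⁿ (sup norm ‖·‖ on ℝⁿ). Then the periodic problem u′(t) = f(t,u(t)) on [0,a] with u(0) = u(a) has a unique solution u ∈ C([0,a],ℝⁿ). -/

import Mathlib

open Filter Topology

/-- The partial order `z₁ ≼ z₂` on `ℂ`: componentwise on real and imaginary parts. -/
def cle (z w : ℂ) : Prop := z.re ≤ w.re ∧ z.im ≤ w.im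

/-- The strict order `z₁ ≺ z₂` on `ℂ`: strict inequalities in both components. -/
def clt (z w : ℂ) : Prop := z.re < w.re ∧ z.im < w.im

/-- A complex valued metric on `X`. -/
structure IsCVMetric {X : Type*} (d : X → X → ℂ) : Prop where
  nonneg : ∀ x y, cle 0 (d x y)
  eq_zero_iff : ∀ x y, d x y = 0 ↔ x = y
  symm : ∀ x y, d x y = d y x
  triangle : ∀ x y z, cle (d x y) (d x z + d z y)

/-- Cauchy sequence in a complex valued metric space. -/
def CVCauchy {X : Type*} (d : X → X → ℂ) (u : ℕ → X) : Prop :=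
  ∀ c : ℂ, clt 0 c → ∃ n₀ : ℕ, ∀ n > n₀, ∀ m > n₀, clt (d (u n) (u m)) c

/-- Convergence of a sequence in a complex valued metric space. -/
def CVConv {X : Type*} (d : X → X → ℂ) (u : ℕ → X) (x : X) : Prop :=
  ∀ c : ℂ, clt 0 c → ∃ n₀ : ℕ, ∀ n > n₀, clt (d (u n) x) c

/-- Completeness: every Cauchy sequence converges (moduli of distances tend to 0). -/
def CVComplete {X : Type*} (d : X → X → ℂ) : Prop :=
  ∀ u : ℕ → X, CVCauchy d u →
    ∃ x : X, Tendsto (fun n => ‖d (u n) x‖) atTop (𝓝 0)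

/-- Componentwise `limsup` of a sequence of complex numbers. -/
noncomputable def climsup (z : ℕ → ℂ) : ℂ :=
  ⟨limsup (fun n => (z n).re) atTop, limsup (fun n => (z n).im) atTop⟩

/-- A `ℂ`-simulation function. -/
def IsCSimulation (ξ : ℂ → ℂ → ℂ) : Prop :=
  ξ 0 0 = 0 ∧
  (∀ t s : ℂ, cle 0 t → t ≠ 0 → cle 0 s → s ≠ 0 →
    cle (ξ t s) (s - t) ∧ ξ t s ≠ s - t) ∧
  (∀ tn sn : ℕ → ℂ, (∀ n, cle 0 (tn n) ∧ tn n ≠ 0) → (∀ n, cle 0 (sn n) ∧ sn n ≠ 0) →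
    ∀ L : ℝ, 0 < L →
    Tendsto (fun n => ‖tn n‖) atTop (𝓝 L) →
    Tendsto (fun n => ‖sn n‖) atTop (𝓝 L) →
    cle (climsup (fun n => ξ ((‖tn n‖ : ℝ)) ((‖sn n‖ : ℝ)))) 0 ∧
    climsup (fun n => ξ ((‖tn n‖ : ℝ)) ((‖sn n‖ : ℝ))) ≠ 0)

/-!
Adding `η u` to both sides turns `u' = f(t, u)` into the linear problem `w' + η w = h` with
forcing `h = f(t, u) + η u`. Its unique `a`-periodic solution is `∫₀ᵃ H(t,s) h(s) ds` with
`H ≥ 0` and `∫₀ᵃ H(t,s) ds = 1/η`, and `u ↦ f(t, u) + η u` is 1-Lipschitz, so the resulting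
operator on `C([0,a], E)` contracts the sup distance by `1/η < 1`. The Banach fixed point
theorem then gives existence and uniqueness.
-/

open Set Function MeasureTheory intervalIntegral

section LinearProblem

variable {E : Type*} [NormedAddCommGroup E] [NormedSpace ℝ E] {η a M t : ℝ} {h k w : ℝ → E}

theorem exp_mul_sub_one_pos (hη : 0 < η) (ha : 0 < a) : 0 < Real.exp (η * a) - 1 :=
  sub_pos.2 (Real.one_lt_exp_iff.2 (mul_pos hη ha))

theorem integral_exp_mul_eq (hη : η ≠ 0) (t : ℝ) :
    ∫ s in (0:ℝ)..t, Real.exp (η * s) = (Real.exp (η * t) - 1) / η := by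
  rw [integral_comp_mul_left (fun s => Real.exp s) hη, integral_exp, mul_zero, Real.exp_zero,
    smul_eq_mul, inv_mul_eq_div]

noncomputable def weightedPrimitive (η : ℝ) (h : ℝ → E) (t : ℝ) : E :=
  ∫ s in (0:ℝ)..t, Real.exp (η * s) • h s

theorem continuous_exp_mul_smul (η : ℝ) (hh : Continuous h) :
    Continuous fun s => Real.exp (η * s) • h s := by
  fun_prop

theorem weightedPrimitive_sub (hh : Continuous h) (hk : Continuous k) :
    weightedPrimitive η (h - k) = weightedPrimitive η h - weightedPrimitive η k := by
  ext1 t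
  simp only [weightedPrimitive, Pi.sub_apply, smul_sub]
  exact integral_sub ((continuous_exp_mul_smul η hh).intervalIntegrable 0 t)
    ((continuous_exp_mul_smul η hk).intervalIntegrable 0 t)

theorem norm_weightedPrimitive_le (hη : 0 < η) (ht : 0 ≤ t) (hM : ∀ s ∈ Icc 0 t, ‖h s‖ ≤ M) :
    ‖weightedPrimitive η h t‖ ≤ M * ((Real.exp (η * t) - 1) / η) := by
  have hbound : ∀ s ∈ Ioc 0 t, ‖Real.exp (η * s) • h s‖ ≤ M * Real.exp (η * s) := by
    intro s hs
    rw [norm_smul, Real.norm_of_nonneg (Real.exp_pos _).le, mul_comm]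
    exact mul_le_mul_of_nonneg_right (hM s (Ioc_subset_Icc_self hs)) (Real.exp_pos _).le
  calc ‖weightedPrimitive η h t‖ ≤ ∫ s in (0:ℝ)..t, M * Real.exp (η * s) :=
        norm_integral_le_of_norm_le ht (ae_of_all _ hbound)
          ((by fun_prop : Continuous fun s => M * Real.exp (η * s)).intervalIntegrable _ _)
    _ = M * ((Real.exp (η * t) - 1) / η) := by
        rw [intervalIntegral.integral_const_mul, integral_exp_mul_eq hη.ne']

/-- The `a`-periodic solution of `w' + η w = h`, by variation of constants; this is
`t ↦ ∫₀ᵃ H(t,s) h(s) ds` for the Green kernel `H` of the periodic problem. -/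
noncomputable def periodicSolution (η a : ℝ) (h : ℝ → E) (t : ℝ) : E :=
  Real.exp (-(η * t)) •
    ((Real.exp (η * a) - 1)⁻¹ • weightedPrimitive η h a + weightedPrimitive η h t)

theorem periodicSolution_zero (hη : 0 < η) (ha : 0 < a) :
    periodicSolution η a h 0 = periodicSolution η a h a := by
  have hc := (exp_mul_sub_one_pos hη ha).ne'
  simp only [periodicSolution, weightedPrimitive, integral_same, mul_zero, neg_zero,
    Real.exp_zero, one_smul, add_zero]
  match_scalars
  rw [Real.exp_neg]
  field_simp
  ring

theorem periodicSolution_sub (hh : Continuous h) (hk : Continuous k) :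
    periodicSolution η a (h - k) = periodicSolution η a h - periodicSolution η a k := by
  ext1 t
  simp only [periodicSolution, weightedPrimitive_sub hh hk, Pi.sub_apply, smul_sub, smul_add]
  abel

theorem norm_periodicSolution_le (hη : 0 < η) (ha : 0 < a) (hM : ∀ s ∈ Icc 0 a, ‖h s‖ ≤ M)
    (ht : t ∈ Icc 0 a) : ‖periodicSolution η a h t‖ ≤ M / η := by
  have hc := exp_mul_sub_one_pos hη ha
  have hPa := norm_weightedPrimitive_le hη ha.le hM
  have hPt := norm_weightedPrimitive_le hη ht.1 fun s hs => hM s ⟨hs.1, hs.2.trans ht.2⟩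
  calc ‖periodicSolution η a h t‖
      ≤ Real.exp (-(η * t)) * ((Real.exp (η * a) - 1)⁻¹ * ‖weightedPrimitive η h a‖ +
          ‖weightedPrimitive η h t‖) := by
        rw [periodicSolution, norm_smul, Real.norm_of_nonneg (Real.exp_pos _).le]
        gcongr
        refine (norm_add_le _ _).trans_eq ?_
        rw [norm_smul, Real.norm_of_nonneg (inv_pos.2 hc).le]
    _ ≤ Real.exp (-(η * t)) * ((Real.exp (η * a) - 1)⁻¹ * (M * ((Real.exp (η * a) - 1) / η)) +
          M * ((Real.exp (η * t) - 1) / η)) := by gcongr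
    _ = M / η := by
        rw [Real.exp_neg]
        field_simp
        ring

variable [CompleteSpace E]

theorem hasDerivAt_weightedPrimitive (hh : Continuous h) (t : ℝ) :
    HasDerivAt (weightedPrimitive η h) (Real.exp (η * t) • h t) t :=
  (continuous_exp_mul_smul η hh).integral_hasStrictDerivAt 0 t |>.hasDerivAt

/-- Variation of constants: `(e^{ηs} w s)' = e^{ηs} (w' s + η w s)`. -/
theorem weightedPrimitive_eq_of_hasDerivWithinAt (hh : Continuous h)
    (hw : ContinuousOn w (Icc 0 a))
    (hw' : ∀ s ∈ Icc 0 a, HasDerivWithinAt w (h s - η • w s) (Icc 0 a) s)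
    (ht : t ∈ Icc 0 a) :
    weightedPrimitive η h t = Real.exp (η * t) • w t - w 0 := by
  have hsub : Icc 0 t ⊆ Icc 0 a := Icc_subset_Icc le_rfl ht.2
  have hderiv : ∀ s ∈ Ioo 0 t,
      HasDerivAt (fun s => Real.exp (η * s) • w s) (Real.exp (η * s) • h s) s := by
    intro s hs
    have hws : HasDerivAt w (h s - η • w s) s :=
      (hw' s (Ioo_subset_Icc_self.trans hsub hs)).hasDerivAt
        (Icc_mem_nhds hs.1 (hs.2.trans_le ht.2))
    have hexp : HasDerivAt (fun s => Real.exp (η * s)) (Real.exp (η * s) * η) s := by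
      simpa using ((hasDerivAt_id s).const_mul η).exp
    exact (hexp.smul hws).congr_deriv (by rw [smul_sub, smul_smul, sub_add_cancel])
  rw [weightedPrimitive, integral_eq_sub_of_hasDeriv_right_of_le ht.1
    ((by fun_prop : Continuous fun s => Real.exp (η * s)).continuousOn.smul (hw.mono hsub))
    (fun s hs => (hderiv s hs).hasDerivWithinAt)
    ((continuous_exp_mul_smul η hh).intervalIntegrable 0 t)]
  simp

theorem hasDerivAt_periodicSolution (hh : Continuous h) (t : ℝ) :
    HasDerivAt (periodicSolution η a h) (h t - η • periodicSolution η a h t) t := by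
  have hexp : HasDerivAt (fun t => Real.exp (-(η * t))) (Real.exp (-(η * t)) * -η) t := by
    simpa using ((hasDerivAt_id t).const_mul η).neg.exp
  refine (hexp.smul ((hasDerivAt_weightedPrimitive hh t).const_add _)).congr_deriv ?_
  rw [smul_smul, ← Real.exp_add, neg_add_cancel, Real.exp_zero, one_smul, mul_comm, mul_smul,
    neg_smul]
  exact (sub_eq_add_neg _ _).symm

theorem continuous_periodicSolution (hh : Continuous h) : Continuous (periodicSolution η a h) :=
  continuous_iff_continuousAt.2 fun t => (hasDerivAt_periodicSolution hh t).continuousAt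

theorem eqOn_periodicSolution (hη : 0 < η) (ha : 0 < a) (hh : Continuous h)
    (hw : ContinuousOn w (Icc 0 a))
    (hw' : ∀ s ∈ Icc 0 a, HasDerivWithinAt w (h s - η • w s) (Icc 0 a) s) (hper : w 0 = w a) :
    EqOn w (periodicSolution η a h) (Icc 0 a) := by
  intro t ht
  have hc := (exp_mul_sub_one_pos hη ha).ne'
  have hwa : Real.exp (η * a) • w a - w 0 = (Real.exp (η * a) - 1) • w 0 := by
    rw [hper, sub_smul, one_smul]
  rw [periodicSolution, weightedPrimitive_eq_of_hasDerivWithinAt hh hw hw' ht,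
    weightedPrimitive_eq_of_hasDerivWithinAt hh hw hw' (right_mem_Icc.2 ha.le), hwa,
    inv_smul_smul₀ hc, add_sub_cancel, smul_smul, ← Real.exp_add, neg_add_cancel,
    Real.exp_zero, one_smul]

end LinearProblem

section PeriodicProblem

variable {E : Type*} [NormedAddCommGroup E] [NormedSpace ℝ E] {a η : ℝ} {f : ℝ → E → E}

def IsPeriodicSolution (f : ℝ → E → E) (a : ℝ) (u : ℝ → E) : Prop :=
  ContinuousOn u (Icc 0 a) ∧ (∀ t ∈ Icc 0 a, HasDerivWithinAt u (f t (u t)) (Icc 0 a) t) ∧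
    u 0 = u a

noncomputable def shiftedForcing (ha : 0 ≤ a) (hf : ContinuousOn (uncurry f) (Icc 0 a ×ˢ univ))
    (η : ℝ) (u : C(Icc 0 a, E)) : C(ℝ, E) :=
  ContinuousMap.IccExtend ha
    ⟨fun p => f p (u p) + η • u p,
      (hf.comp_continuous (continuous_subtype_val.prodMk u.continuous)
        fun p => ⟨p.2, mem_univ _⟩).add (u.continuous.const_smul η)⟩

theorem shiftedForcing_of_mem (ha : 0 ≤ a) (hf : ContinuousOn (uncurry f) (Icc 0 a ×ˢ univ))
    (u : C(Icc 0 a, E)) {t : ℝ} (ht : t ∈ Icc 0 a) :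
    shiftedForcing ha hf η u t = f t (u ⟨t, ht⟩) + η • u ⟨t, ht⟩ := by
  rw [shiftedForcing, ContinuousMap.coe_IccExtend, IccExtend_of_mem _ _ ht]
  rfl

variable [CompleteSpace E]

/-- The fixed-point form `u = ∫₀ᵃ H(·,s) (f(s, u s) + η u s) ds` of the periodic problem. -/
noncomputable def periodicOperator (ha : 0 ≤ a) (hf : ContinuousOn (uncurry f) (Icc 0 a ×ˢ univ))
    (η : ℝ) (u : C(Icc 0 a, E)) : C(Icc 0 a, E) :=
  ⟨fun p => periodicSolution η a (shiftedForcing ha hf η u) p,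
    (continuous_periodicSolution (shiftedForcing ha hf η u).continuous).comp continuous_subtype_val⟩

theorem dist_periodicOperator_le (ha : 0 < a) (hf : ContinuousOn (uncurry f) (Icc 0 a ×ˢ univ))
    (hη : 0 < η) (hlip : ∀ t ∈ Icc 0 a, ∀ x y : E, ‖f t x + η • x - f t y - η • y‖ ≤ ‖x - y‖)
    (u v : C(Icc 0 a, E)) :
    dist (periodicOperator ha.le hf η u) (periodicOperator ha.le hf η v) ≤ η⁻¹ * dist u v := by
  refine (ContinuousMap.dist_le (by positivity)).2 fun p => ?_
  rw [dist_eq_norm, inv_mul_eq_div]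
  change ‖periodicSolution η a (shiftedForcing ha.le hf η u) p -
    periodicSolution η a (shiftedForcing ha.le hf η v) p‖ ≤ _
  rw [← Pi.sub_apply,
    ← periodicSolution_sub (ContinuousMap.continuous _) (ContinuousMap.continuous _)]
  refine norm_periodicSolution_le hη ha (fun s hs => ?_) p.2
  rw [Pi.sub_apply, shiftedForcing_of_mem ha.le hf u hs, shiftedForcing_of_mem ha.le hf v hs,
    sub_add_eq_sub_sub]
  refine (hlip s hs _ _).trans ?_
  rw [← dist_eq_norm]
  exact ContinuousMap.dist_apply_le_dist _

theorem contractingWith_periodicOperator (ha : 0 < a)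
    (hf : ContinuousOn (uncurry f) (Icc 0 a ×ˢ univ)) (hη : 1 < η)
    (hlip : ∀ t ∈ Icc 0 a, ∀ x y : E, ‖f t x + η • x - f t y - η • y‖ ≤ ‖x - y‖) :
    ContractingWith (Real.toNNReal η⁻¹) (periodicOperator ha.le hf η) := by
  have hη₀ : 0 < η := one_pos.trans hη
  refine ⟨Real.toNNReal_lt_one.2 (inv_lt_one_of_one_lt₀ hη), .of_dist_le_mul fun u v => ?_⟩
  rw [Real.coe_toNNReal _ (inv_pos.2 hη₀).le]
  exact dist_periodicOperator_le ha hf hη₀ hlip u v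

theorem isPeriodicSolution_IccExtend (ha : 0 < a)
    (hf : ContinuousOn (uncurry f) (Icc 0 a ×ˢ univ)) (hη : 0 < η) {u : C(Icc 0 a, E)}
    (hu : IsFixedPt (periodicOperator ha.le hf η) u) :
    IsPeriodicSolution f a (IccExtend ha.le u) := by
  set F := shiftedForcing ha.le hf η u
  have hU : EqOn (IccExtend ha.le u) (periodicSolution η a F) (Icc 0 a) := fun t ht => by
    rw [IccExtend_of_mem _ _ ht, ← hu]
    rfl
  refine ⟨(continuous_IccExtend_iff.2 u.continuous).continuousOn, fun t ht => ?_, ?_⟩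
  · refine ((hasDerivAt_periodicSolution F.continuous t).hasDerivWithinAt.congr hU
      (hU ht)).congr_deriv ?_
    rw [← hU ht, shiftedForcing_of_mem ha.le hf u ht, IccExtend_of_mem _ _ ht, add_sub_cancel_right]
  · rw [hU (left_mem_Icc.2 ha.le), hU (right_mem_Icc.2 ha.le), periodicSolution_zero hη ha]

theorem isFixedPt_of_isPeriodicSolution (ha : 0 < a)
    (hf : ContinuousOn (uncurry f) (Icc 0 a ×ˢ univ)) (hη : 0 < η) {v : ℝ → E}
    (hv : IsPeriodicSolution f a v) :
    IsFixedPt (periodicOperator ha.le hf η) ⟨(Icc 0 a).domRestrict v, hv.1.domRestrict⟩ := by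
  set V : C(Icc 0 a, E) := ⟨(Icc 0 a).domRestrict v, hv.1.domRestrict⟩
  have hV : EqOn v (periodicSolution η a (shiftedForcing ha.le hf η V)) (Icc 0 a) := by
    refine eqOn_periodicSolution hη ha (ContinuousMap.continuous _) hv.1
      (fun t ht => (hv.2.1 t ht).congr_deriv ?_) hv.2.2
    rw [shiftedForcing_of_mem ha.le hf V ht]
    exact (add_sub_cancel_right _ _).symm
  exact ContinuousMap.ext fun p => (hV p.2).symm

end PeriodicProblem

theorem stmt18 (n : ℕ) (a : ℝ) (ha : 0 < a) (f : ℝ → (Fin n → ℝ) → (Fin n → ℝ))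
    (hf : ContinuousOn (Function.uncurry f) (Set.Icc 0 a ×ˢ Set.univ))
    (η : ℝ) (hη : 1 < η)
    (hlip : ∀ t ∈ Set.Icc (0:ℝ) a, ∀ u v : Fin n → ℝ,
      ‖f t u + η • u - f t v - η • v‖ ≤ ‖u - v‖) :
    ∃ u : ℝ → (Fin n → ℝ),
      (ContinuousOn u (Set.Icc 0 a) ∧
        (∀ t ∈ Set.Icc (0:ℝ) a, HasDerivWithinAt u (f t (u t)) (Set.Icc 0 a) t) ∧
        u 0 = u a) ∧
      ∀ v : ℝ → (Fin n → ℝ),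
        (ContinuousOn v (Set.Icc 0 a) ∧
          (∀ t ∈ Set.Icc (0:ℝ) a, HasDerivWithinAt v (f t (v t)) (Set.Icc 0 a) t) ∧
          v 0 = v a) →
        Set.EqOn v u (Set.Icc 0 a) := by
  have hη₀ : 0 < η := one_pos.trans hη
  have hT := contractingWith_periodicOperator ha hf hη hlip
  obtain ⟨u, hu⟩ : ∃ u, IsFixedPt (periodicOperator ha.le hf η) u :=
    ⟨_, hT.fixedPoint_isFixedPt⟩
  refine ⟨IccExtend ha.le u, isPeriodicSolution_IccExtend ha hf hη₀ hu, fun v hv t ht => ?_⟩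
  rw [IccExtend_of_mem _ _ ht,
    ← hT.fixedPoint_unique' (isFixedPt_of_isPeriodicSolution ha hf hη₀ hv) hu]
  rfl
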